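/- arXiv:1012.3306 — 2 statements merged into one kernel-verified Lean document; each statement's English description precedes it below -/
import Mathlib

section
/- For any m ≥ 0 and 0 ≤ k ≤ m+1, the integral over the standard m-simplex Δ_m = {(s_0,...,s_m) : s_i ≥ 0, s_0 + ... + s_m = 1} of the function (s_0 · s_1 ⋯ s_{k-1})^{-1/2} is at most π^k / (m-k)!. -/
/-!
Write `c = 1 - ∑ sᵢ` for the last barycentric coordinate and integrate out the last free
coordinate `x ∈ [0, c]`. With an extra weight `c ^ j`, induction on `m` bounds the integral with
`k ≤ m` singular factors by `2 ^ k j! / (m - k + j)!`: a regular coordinate contributes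
`∫₀ᶜ (c - x) ^ j = c ^ (j + 1) / (j + 1)`, a singular one
`∫₀ᶜ x ^ (-1/2) (c - x) ^ j ≤ 2 c ^ j`. When `k = m + 1`, the last two barycentric coordinates
`x` and `c - x` are both singular, and `∫₀ᶜ dx / √(x (c - x)) = π`, an antiderivative being
`arcsin (2x / c - 1)`. Finally `2 ≤ π`.
-/

open MeasureTheory Real Set
open scoped ENNReal Nat

theorem setLIntegral_Icc_ofReal_deriv {g g' : ℝ → ℝ} {a b : ℝ} (hab : a ≤ b)
    (hcont : ContinuousOn g (Icc a b)) (hderiv : ∀ x ∈ Ioo a b, HasDerivAt g (g' x) x)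
    (hpos : ∀ x ∈ Ioo a b, 0 ≤ g' x) :
    ∫⁻ x in Icc a b, ENNReal.ofReal (g' x) = ENNReal.ofReal (g b - g a) := by
  have hint := intervalIntegral.integrableOn_deriv_of_nonneg hcont hderiv hpos
  rw [setLIntegral_congr Ioo_ae_eq_Icc.symm, ← ofReal_integral_eq_lintegral_ofReal
    (hint.mono_set Ioo_subset_Ioc_self) (ae_restrict_of_forall_mem measurableSet_Ioo hpos),
    ← integral_Ioc_eq_integral_Ioo, ← intervalIntegral.integral_of_le hab,
    intervalIntegral.integral_eq_sub_of_hasDerivAt_of_le hab hcont hderiv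
      ((intervalIntegrable_iff_integrableOn_Ioc_of_le hab).2 hint)]

theorem setLIntegral_Icc_rpow_neg_half {c : ℝ} (hc : 0 ≤ c) :
    ∫⁻ x in Icc 0 c, ENNReal.ofReal (x ^ (-(1 / 2) : ℝ))
      = ENNReal.ofReal (2 * c ^ (1 / 2 : ℝ)) := by
  rw [setLIntegral_Icc_ofReal_deriv (g := fun x => 2 * x ^ (1 / 2 : ℝ)) hc
    ((continuous_const.mul (continuous_rpow_const (by norm_num))).continuousOn)]
  · norm_num
  · intro x hx
    exact ((hasDerivAt_rpow_const (Or.inl hx.1.ne')).const_mul 2).congr_deriv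
      (by norm_num [← mul_assoc])
  · exact fun x hx => rpow_nonneg hx.1.le _

theorem setLIntegral_Icc_sub_pow {c : ℝ} (hc : 0 ≤ c) (j : ℕ) :
    ∫⁻ x in Icc 0 c, ENNReal.ofReal ((c - x) ^ j) = ENNReal.ofReal (c ^ (j + 1) / (j + 1)) := by
  rw [setLIntegral_Icc_ofReal_deriv (g := fun x => -(c - x) ^ (j + 1) / (j + 1)) hc
    (by fun_prop)]
  · simp [neg_div]
  · intro x _
    refine ((((hasDerivAt_id x).const_sub c).pow (j + 1)).neg.div_const
      ((j : ℝ) + 1)).congr_deriv ?_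
    field_simp
    simp
  · exact fun x hx => pow_nonneg (sub_nonneg.2 hx.2.le) _

theorem setLIntegral_Icc_rpow_neg_half_mul_sub_pow_le {c : ℝ} (hc0 : 0 ≤ c) (hc1 : c ≤ 1)
    (j : ℕ) :
    ∫⁻ x in Icc 0 c, ENNReal.ofReal (x ^ (-(1 / 2) : ℝ)) * ENNReal.ofReal ((c - x) ^ j)
      ≤ ENNReal.ofReal (c ^ j) * ENNReal.ofReal 2 := by
  calc _ ≤ ∫⁻ x in Icc 0 c, ENNReal.ofReal (x ^ (-(1 / 2) : ℝ)) * ENNReal.ofReal (c ^ j) :=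
        setLIntegral_mono' measurableSet_Icc fun x hx => by
          gcongr
          · linarith [hx.2]
          · linarith [hx.1]
    _ = ENNReal.ofReal (2 * c ^ (1 / 2 : ℝ)) * ENNReal.ofReal (c ^ j) := by
        rw [lintegral_mul_const' _ _ ENNReal.ofReal_ne_top, setLIntegral_Icc_rpow_neg_half hc0]
    _ ≤ ENNReal.ofReal 2 * ENNReal.ofReal (c ^ j) := by
        gcongr
        exact mul_le_of_le_one_right zero_le_two (rpow_le_one hc0 hc1 (by norm_num))
    _ = _ := mul_comm _ _

theorem setLIntegral_Icc_rpow_neg_half_mul_sub_rpow_neg_half {c : ℝ} (hc : 0 < c) :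
    ∫⁻ x in Icc 0 c, ENNReal.ofReal (x ^ (-(1 / 2) : ℝ) * (c - x) ^ (-(1 / 2) : ℝ))
      = ENNReal.ofReal π := by
  rw [setLIntegral_Icc_ofReal_deriv (g := fun x => arcsin (2 * x / c - 1)) hc.le (by fun_prop)]
  · simp only [mul_div_assoc, div_self hc.ne', zero_div, mul_zero]
    norm_num [arcsin_one]
  · intro x hx
    have hx0 : 0 < x := hx.1
    have hxc : 0 < c - x := sub_pos.2 hx.2
    have h1 : 2 * x / c - 1 ≠ -1 := by
      rw [Ne, sub_eq_neg_self]; positivity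
    have h2 : 2 * x / c - 1 ≠ 1 := by
      rw [Ne, sub_eq_iff_eq_add, div_eq_iff hc.ne']; linarith
    refine ((hasDerivAt_arcsin h1 h2).comp x
      ((((hasDerivAt_id x).const_mul 2).div_const c).sub_const 1)).congr_deriv ?_
    have hsq : 1 - (2 * x / c - 1) ^ 2 = (2 / c) ^ 2 * (x * (c - x)) := by
      field_simp; ring
    rw [rpow_neg hx0.le, rpow_neg hxc.le, ← sqrt_eq_rpow, ← sqrt_eq_rpow, hsq,
      sqrt_mul (by positivity), sqrt_sq (by positivity), sqrt_mul hx0.le]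
    field_simp
  · exact fun x hx => mul_nonneg (rpow_nonneg hx.1.le _) (rpow_nonneg (sub_nonneg.2 hx.2.le) _)

theorem setLIntegral_Icc_rpow_neg_half_mul_sub_rpow_neg_half_le {c : ℝ} (hc : 0 ≤ c) :
    ∫⁻ x in Icc 0 c,
        ENNReal.ofReal (x ^ (-(1 / 2) : ℝ)) * ENNReal.ofReal ((c - x) ^ (-(1 / 2) : ℝ))
      ≤ ENNReal.ofReal π := by
  obtain rfl | hc := hc.eq_or_lt
  · simp
  rw [← setLIntegral_Icc_rpow_neg_half_mul_sub_rpow_neg_half hc]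
  refine (setLIntegral_congr_fun measurableSet_Icc fun x hx => ?_).le
  exact (ENNReal.ofReal_mul (rpow_nonneg hx.1 _)).symm

theorem lintegral_snoc {n : ℕ} {f : (Fin (n + 1) → ℝ) → ℝ≥0∞} (hf : Measurable f) :
    ∫⁻ t, f t = ∫⁻ s : Fin n → ℝ, ∫⁻ x, f (Fin.snoc s x) := by
  set e := MeasurableEquiv.piFinSuccAbove (fun _ : Fin (n + 1) => ℝ) (Fin.last n)
  rw [← (volume_preserving_piFinSuccAbove _ (Fin.last n)).symm.lintegral_comp hf,
    Measure.volume_eq_prod]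
  refine (lintegral_prod_symm _ (hf.comp e.symm.measurable).aemeasurable).trans ?_
  simp [e, Fin.snocEquiv]

def solidSimplex (m : ℕ) : Set (Fin m → ℝ) := {s | (∀ i, 0 ≤ s i) ∧ ∑ i, s i ≤ 1}

theorem measurableSet_solidSimplex (m : ℕ) : MeasurableSet (solidSimplex m) := by
  unfold solidSimplex; measurability

theorem one_sub_sum_mem_Icc {m : ℕ} {s : Fin m → ℝ} (hs : s ∈ solidSimplex m) :
    1 - ∑ i, s i ∈ Icc 0 1 :=
  ⟨sub_nonneg.2 hs.2, sub_le_self _ (Finset.sum_nonneg fun i _ => hs.1 i)⟩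

theorem snoc_mem_solidSimplex_iff {m : ℕ} {s : Fin m → ℝ} {x : ℝ} :
    Fin.snoc s x ∈ solidSimplex (m + 1) ↔
      s ∈ solidSimplex m ∧ x ∈ Icc 0 (1 - ∑ i, s i) := by
  simp only [solidSimplex, mem_ofPred_eq, Fin.forall_fin_succ', Fin.snoc_castSucc, Fin.snoc_last,
    Fin.sum_univ_castSucc, mem_Icc]
  constructor
  · rintro ⟨⟨hs, hx⟩, hsum⟩
    exact ⟨⟨hs, by linarith⟩, hx, by linarith⟩
  · rintro ⟨⟨hs, -⟩, hx, hxs⟩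
    exact ⟨⟨hs, hx⟩, by linarith⟩

theorem setLIntegral_solidSimplex_zero (f : (Fin 0 → ℝ) → ℝ≥0∞) :
    ∫⁻ s in solidSimplex 0, f s = f 0 := by
  have : solidSimplex 0 = univ := by ext s; simp [solidSimplex]
  rw [this, Measure.restrict_univ, volume_pi, Measure.pi_of_empty _ 0, lintegral_dirac]

theorem setLIntegral_solidSimplex_succ {m : ℕ} {f : (Fin (m + 1) → ℝ) → ℝ≥0∞}
    (hf : Measurable f) :
    ∫⁻ t in solidSimplex (m + 1), f t
      = ∫⁻ s in solidSimplex m, ∫⁻ x in Icc 0 (1 - ∑ i, s i), f (Fin.snoc s x) := by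
  rw [← lintegral_indicator (measurableSet_solidSimplex _), lintegral_snoc
    (hf.indicator (measurableSet_solidSimplex _)), ← lintegral_indicator
    (measurableSet_solidSimplex _)]
  refine lintegral_congr fun s => ?_
  by_cases hs : s ∈ solidSimplex m
  · rw [indicator_of_mem hs, ← lintegral_indicator measurableSet_Icc]
    congr 1 with x
    simp [indicator, snoc_mem_solidSimplex_iff, hs]
  · simp [indicator, snoc_mem_solidSimplex_iff, hs]

def baryCoord {m : ℕ} (s : Fin m → ℝ) (i : ℕ) : ℝ :=
  if h : i < m then s ⟨i, h⟩ else 1 - ∑ j, s j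

noncomputable def baryInvSqrtProd (m k : ℕ) (s : Fin m → ℝ) : ℝ≥0∞ :=
  ∏ i ∈ Finset.range k, ENNReal.ofReal (baryCoord s i ^ (-(1 / 2) : ℝ))

theorem measurable_baryCoord (m i : ℕ) : Measurable fun s : Fin m → ℝ => baryCoord s i := by
  unfold baryCoord
  split_ifs <;> fun_prop

theorem measurable_baryInvSqrtProd (m k : ℕ) : Measurable (baryInvSqrtProd m k) :=
  Finset.measurable_prod _ fun i _ => ((measurable_baryCoord m i).pow_const _).ennreal_ofReal

theorem baryCoord_snoc_of_lt {m i : ℕ} (hi : i < m) (s : Fin m → ℝ) (x : ℝ) :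
    baryCoord (Fin.snoc s x : Fin (m + 1) → ℝ) i = baryCoord s i := by
  simp only [baryCoord, dif_pos hi, dif_pos (hi.trans m.lt_succ_self)]
  exact Fin.snoc_castSucc (α := fun _ => ℝ) x s ⟨i, hi⟩

theorem baryCoord_snoc_self {m : ℕ} (s : Fin m → ℝ) (x : ℝ) :
    baryCoord (Fin.snoc s x : Fin (m + 1) → ℝ) m = x := by
  simp only [baryCoord, dif_pos m.lt_succ_self]
  exact Fin.snoc_last (α := fun _ => ℝ) x s

theorem one_sub_sum_snoc {m : ℕ} (s : Fin m → ℝ) (x : ℝ) :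
    1 - ∑ i, (Fin.snoc s x : Fin (m + 1) → ℝ) i = 1 - ∑ i, s i - x := by
  simp [Fin.sum_univ_castSucc, sub_sub]

theorem baryCoord_snoc_succ {m : ℕ} (s : Fin m → ℝ) (x : ℝ) :
    baryCoord (Fin.snoc s x : Fin (m + 1) → ℝ) (m + 1) = 1 - ∑ i, s i - x := by
  simp only [baryCoord, dif_neg (lt_irrefl _), one_sub_sum_snoc]

theorem baryInvSqrtProd_snoc_of_le {m k : ℕ} (hk : k ≤ m) (s : Fin m → ℝ) (x : ℝ) :
    baryInvSqrtProd (m + 1) k (Fin.snoc s x) = baryInvSqrtProd m k s :=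
  Finset.prod_congr rfl fun i hi => by
    rw [baryCoord_snoc_of_lt ((Finset.mem_range.1 hi).trans_le hk)]

theorem baryInvSqrtProd_snoc_succ {m : ℕ} (s : Fin m → ℝ) (x : ℝ) :
    baryInvSqrtProd (m + 1) (m + 1) (Fin.snoc s x)
      = baryInvSqrtProd m m s * ENNReal.ofReal (x ^ (-(1 / 2) : ℝ)) := by
  rw [baryInvSqrtProd, Finset.prod_range_succ, ← baryInvSqrtProd,
    baryInvSqrtProd_snoc_of_le le_rfl, baryCoord_snoc_self]

theorem baryInvSqrtProd_snoc_succ_succ {m : ℕ} (s : Fin m → ℝ) (x : ℝ) :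
    baryInvSqrtProd (m + 1) (m + 2) (Fin.snoc s x)
      = baryInvSqrtProd m m s * ENNReal.ofReal (x ^ (-(1 / 2) : ℝ))
          * ENNReal.ofReal ((1 - ∑ i, s i - x) ^ (-(1 / 2) : ℝ)) := by
  rw [baryInvSqrtProd, Finset.prod_range_succ, ← baryInvSqrtProd,
    baryInvSqrtProd_snoc_succ, baryCoord_snoc_succ]

theorem setLIntegral_baryInvSqrtProd_mul_pow_le {m k : ℕ} (hk : k ≤ m) (j : ℕ) :
    ∫⁻ s in solidSimplex m, baryInvSqrtProd m k s * ENNReal.ofReal ((1 - ∑ i, s i) ^ j)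
      ≤ ENNReal.ofReal (2 ^ k * j ! / (m - k + j)!) := by
  induction m generalizing k j with
  | zero =>
    obtain rfl := Nat.le_zero.1 hk
    rw [setLIntegral_solidSimplex_zero]
    simp [baryInvSqrtProd, (Nat.factorial_pos j).ne']
  | succ m ih =>
    rw [setLIntegral_solidSimplex_succ
      (by exact (measurable_baryInvSqrtProd _ _).mul (by fun_prop))]
    simp_rw [one_sub_sum_snoc]
    obtain hkm | rfl : k ≤ m ∨ k = m + 1 := by omega
    · simp_rw [baryInvSqrtProd_snoc_of_le hkm]
      calc _ = ∫⁻ s in solidSimplex m, baryInvSqrtProd m k s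
              * ENNReal.ofReal ((1 - ∑ i, s i) ^ (j + 1)) * ENNReal.ofReal ((j + 1 : ℝ)⁻¹) :=
            setLIntegral_congr_fun (measurableSet_solidSimplex m) fun s hs => by
              rw [lintegral_const_mul _ (by fun_prop),
                setLIntegral_Icc_sub_pow (one_sub_sum_mem_Icc hs).1, div_eq_mul_inv,
                ENNReal.ofReal_mul (pow_nonneg (one_sub_sum_mem_Icc hs).1 _), mul_assoc]
        _ = (∫⁻ s in solidSimplex m, baryInvSqrtProd m k s
              * ENNReal.ofReal ((1 - ∑ i, s i) ^ (j + 1)))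
              * ENNReal.ofReal ((j + 1 : ℝ)⁻¹) :=
            lintegral_mul_const' _ _ ENNReal.ofReal_ne_top
        _ ≤ ENNReal.ofReal (2 ^ k * (j + 1)! / (m - k + (j + 1))!)
              * ENNReal.ofReal ((j + 1 : ℝ)⁻¹) := by
            gcongr
            exact ih hkm (j + 1)
        _ = _ := by
            rw [← ENNReal.ofReal_mul (by positivity),
              show m + 1 - k + j = m - k + (j + 1) by omega, Nat.factorial_succ]
            push_cast
            field_simp
    · simp_rw [baryInvSqrtProd_snoc_succ, mul_assoc]
      calc _ ≤ ∫⁻ s in solidSimplex m, baryInvSqrtProd m m s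
              * ENNReal.ofReal ((1 - ∑ i, s i) ^ j) * ENNReal.ofReal 2 :=
            setLIntegral_mono' (measurableSet_solidSimplex m) fun s hs => by
              rw [lintegral_const_mul _ (by fun_prop), mul_assoc]
              gcongr
              exact setLIntegral_Icc_rpow_neg_half_mul_sub_pow_le (one_sub_sum_mem_Icc hs).1
                (one_sub_sum_mem_Icc hs).2 j
        _ = (∫⁻ s in solidSimplex m, baryInvSqrtProd m m s
              * ENNReal.ofReal ((1 - ∑ i, s i) ^ j)) * ENNReal.ofReal 2 :=
            lintegral_mul_const' _ _ ENNReal.ofReal_ne_top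
        _ ≤ ENNReal.ofReal (2 ^ m * j ! / (m - m + j)!) * ENNReal.ofReal 2 := by
            gcongr
            exact ih le_rfl j
        _ = _ := by
            rw [← ENNReal.ofReal_mul (by positivity), Nat.sub_self, Nat.sub_self, pow_succ]
            ring_nf

theorem setLIntegral_baryInvSqrtProd_succ_le (m : ℕ) :
    ∫⁻ s in solidSimplex (m + 1), baryInvSqrtProd (m + 1) (m + 2) s
      ≤ ENNReal.ofReal (π * 2 ^ m) := by
  rw [setLIntegral_solidSimplex_succ (measurable_baryInvSqrtProd _ _)]
  simp_rw [baryInvSqrtProd_snoc_succ_succ, mul_assoc]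
  calc _ ≤ ∫⁻ s in solidSimplex m, baryInvSqrtProd m m s * ENNReal.ofReal π :=
        setLIntegral_mono' (measurableSet_solidSimplex m) fun s hs => by
          rw [lintegral_const_mul _ (by fun_prop)]
          gcongr
          exact setLIntegral_Icc_rpow_neg_half_mul_sub_rpow_neg_half_le (one_sub_sum_mem_Icc hs).1
    _ = (∫⁻ s in solidSimplex m, baryInvSqrtProd m m s) * ENNReal.ofReal π :=
        lintegral_mul_const' _ _ ENNReal.ofReal_ne_top
    _ ≤ ENNReal.ofReal (2 ^ m) * ENNReal.ofReal π := by
        gcongr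
        simpa using setLIntegral_baryInvSqrtProd_mul_pow_le le_rfl 0
    _ = _ := by rw [← ENNReal.ofReal_mul (by positivity), mul_comm]

/-- The integral over the standard `m`-simplex (parametrized by its first `m`
barycentric coordinates `s 0, …, s (m-1)`, with `s_m := 1 - ∑ s i`) of
`(s_0 ⋯ s_{k-1})^{-1/2}` is at most `π^k / (m-k)!`. -/
theorem simplex_integral_bound (m k : ℕ) (hk : k ≤ m + 1) :
    (∫⁻ s in {s : Fin m → ℝ | (∀ i, 0 ≤ s i) ∧ ∑ i, s i ≤ 1},
        ∏ i ∈ Finset.range k,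
          ENNReal.ofReal
            ((if h : i < m then s ⟨i, h⟩ else 1 - ∑ j, s j) ^ (-(1/2) : ℝ))) ≤
      ENNReal.ofReal (π ^ k / (Nat.factorial (m - k))) := by
  change ∫⁻ s in solidSimplex m, baryInvSqrtProd m k s ≤ _
  obtain hkm | rfl : k ≤ m ∨ k = m + 1 := by omega
  · calc _ = ∫⁻ s in solidSimplex m,
              baryInvSqrtProd m k s * ENNReal.ofReal ((1 - ∑ i, s i) ^ 0) := by simp
      _ ≤ ENNReal.ofReal (2 ^ k * 0 ! / (m - k + 0)!) :=
          setLIntegral_baryInvSqrtProd_mul_pow_le hkm 0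
      _ ≤ _ := by
          simp only [Nat.factorial_zero, Nat.cast_one, mul_one, add_zero]
          gcongr
          exact two_le_pi
  · cases m with
    | zero =>
      rw [setLIntegral_solidSimplex_zero]
      simp only [baryInvSqrtProd, baryCoord]
      simp
      linarith [pi_gt_three]
    | succ n =>
      refine (setLIntegral_baryInvSqrtProd_succ_le n).trans (ENNReal.ofReal_le_ofReal ?_)
      rw [show n + 1 - (n + 1 + 1) = 0 by omega, Nat.factorial_zero, Nat.cast_one, div_one,
        pow_succ π (n + 1), mul_comm _ π]
      gcongr
      calc (2 : ℝ) ^ n ≤ π ^ n := by gcongr; exact two_le_pi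
        _ ≤ π ^ (n + 1) := pow_le_pow_right₀ (by linarith [pi_gt_three]) n.le_succ
end

section
/- For an (n+1)-times continuously differentiable function f and points x_0, ..., x_n ∈ ℝ, the sum over i = 0,...,n of the divided differences with the point x_i repeated, ∑_{i=0}^n f[x_0, ..., x_i, x_i, ..., x_n], equals the divided difference f'[x_0, x_1, ..., x_n] of the derivative f'. -/
open MeasureTheory

/-!
Write `Δₙ = {s : Fin n → ℝ | 0 ≤ s, ∑ s ≤ 1}` and `λ(s) = (1 - ∑ s, s₀, …, sₙ₋₁)` for the
barycentric weights, so that `f[x₀,…,xₙ] = ∫_{Δₙ} f⁽ⁿ⁾(∑ λₖ(s) xₖ) ds`. When the node `xᵢ` is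
repeated, the weights of the vertices `i` and `i + 1` of `Δₙ₊₁` multiply the same point, so the
integrand factors through the map `Δₙ₊₁ → Δₙ` adding these two weights. Together with the
coordinate `sᵢ` this map is a shear of `ℝ × ℝⁿ`, hence volume preserving, and its fibre over `t`
is an interval of length `λᵢ(t)`. So the `i`-th summand is `∫_{Δₙ} λᵢ(t) f⁽ⁿ⁺¹⁾(∑ λₖ(t) xₖ) dt`,
and summing over `i` the weights add up to `1`.
-/

/-- The divided difference `f[x₀,…,xₙ]`, defined for `Cⁿ` functions (and
arbitrary, possibly coinciding, points) via Hermite's integral representation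
`f[x₀,…,xₙ] = ∫_{Δₙ} f⁽ⁿ⁾(s₀x₀ + ⋯ + sₙxₙ) dⁿs`; it agrees with the usual
recursive definition on distinct points and extends it continuously. -/
noncomputable def divDiff {E : Type*} [NormedAddCommGroup E] [NormedSpace ℝ E]
    (f : ℝ → E) (n : ℕ) (x : Fin (n + 1) → ℝ) : E :=
  ∫ s in {s : Fin n → ℝ | (∀ i, 0 ≤ s i) ∧ ∑ i, s i ≤ 1},
    iteratedDeriv n f ((1 - ∑ i, s i) * x 0 + ∑ i : Fin n, s i * x i.succ)

section Shear

variable {V : Type*} [AddCommGroup V] [Module ℝ V] [MeasurableSpace V] [MeasurableAdd₂ V]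
  [MeasurableSub₂ V] [MeasurableSMul ℝ V]

def MeasurableEquiv.shear (c : V) : ℝ × V ≃ᵐ ℝ × V where
  toFun p := (p.1, p.2 + p.1 • c)
  invFun p := (p.1, p.2 - p.1 • c)
  left_inv p := by simp
  right_inv p := by simp
  measurable_toFun := by dsimp only [Equiv.coe_fn_mk]; fun_prop
  measurable_invFun := by dsimp only [Equiv.coe_fn_symm_mk]; fun_prop

theorem MeasurableEquiv.measurePreserving_shear (μ : Measure V) [SFinite μ]
    [μ.IsAddRightInvariant] (c : V) :
    MeasurePreserving (shear c) (volume.prod μ) (volume.prod μ) :=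
  (MeasurePreserving.id volume).skew_product (by fun_prop)
    (Filter.Eventually.of_forall fun a => map_add_right_eq_self μ (a • c))

end Shear

theorem map_snd_restrict_prod_Icc {β : Type*} [MeasurableSpace β] (ν : Measure β) [SFinite ν]
    {A : Set β} (hA : MeasurableSet A) {w : β → ℝ} (hw : Measurable w) :
    ((volume.prod ν).restrict {p : ℝ × β | p.2 ∈ A ∧ p.1 ∈ Set.Icc 0 (w p.2)}).map Prod.snd =
      (ν.restrict A).withDensity (fun t => ENNReal.ofReal (w t)) := by
  have hR : MeasurableSet {p : ℝ × β | p.2 ∈ A ∧ p.1 ∈ Set.Icc 0 (w p.2)} :=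
    (measurable_snd hA).inter
      ((measurableSet_le measurable_const measurable_fst).inter
        (measurableSet_le measurable_fst (hw.comp measurable_snd)))
  ext B hB
  rw [Measure.map_apply measurable_snd hB, Measure.restrict_apply (measurable_snd hB),
    Measure.prod_apply_symm ((measurable_snd hB).inter hR), withDensity_apply _ hB,
    Measure.restrict_restrict hB, ← lintegral_indicator (hB.inter hA)]
  congr 1; funext t
  by_cases ht : t ∈ B ∩ A
  · have hslice : (fun a => (a, t)) ⁻¹' (Prod.snd ⁻¹' B ∩ {p | p.2 ∈ A ∧ p.1 ∈ Set.Icc 0 (w p.2)})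
        = Set.Icc 0 (w t) := by
      ext a; simp [ht.1, ht.2]
    rw [hslice, Set.indicator_of_mem ht, Real.volume_Icc, sub_zero]
  · have hslice : (fun a => (a, t)) ⁻¹' (Prod.snd ⁻¹' B ∩ {p | p.2 ∈ A ∧ p.1 ∈ Set.Icc 0 (w p.2)})
        = ∅ :=
      Set.eq_empty_of_forall_notMem fun a ha => ht ⟨ha.1, ha.2.1⟩
    rw [hslice, Set.indicator_of_notMem ht, measure_empty]

theorem setIntegral_prod_Icc_snd {β E : Type*} [MeasurableSpace β] [NormedAddCommGroup E]
    [NormedSpace ℝ E] (ν : Measure β) [SFinite ν]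
    {A : Set β} (hA : MeasurableSet A) {w : β → ℝ} (hw : Measurable w) (hw0 : ∀ t ∈ A, 0 ≤ w t)
    {g : β → E} (hg : StronglyMeasurable g) :
    ∫ p in {p : ℝ × β | p.2 ∈ A ∧ p.1 ∈ Set.Icc 0 (w p.2)}, g p.2 ∂(volume.prod ν) =
      ∫ t in A, w t • g t ∂ν := by
  rw [← integral_map measurable_snd.aemeasurable hg.aestronglyMeasurable,
    map_snd_restrict_prod_Icc ν hA hw,
    integral_withDensity_eq_integral_toReal_smul hw.ennreal_ofReal
      (Filter.Eventually.of_forall fun _ => ENNReal.ofReal_lt_top)]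
  refine setIntegral_congr_fun hA fun t ht => ?_
  rw [ENNReal.toReal_ofReal (hw0 t ht)]

theorem Fin.predAbove_succ_succAbove {n : ℕ} (i m : Fin (n + 1)) :
    i.predAbove (i.succ.succAbove m) = m := by
  rcases lt_or_ge i m with h | h
  · rw [Fin.succAbove_of_le_castSucc _ _ (Fin.succ_le_castSucc_iff.2 h),
      Fin.predAbove_succ_of_le _ _ h.le]
  · rw [Fin.succAbove_of_castSucc_lt _ _ (Fin.castSucc_lt_succ_iff.2 h),
      Fin.predAbove_castSucc_of_le _ _ h]

namespace DividedDifference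

def solidSimplex (n : ℕ) : Set (Fin n → ℝ) := {s | (∀ i, 0 ≤ s i) ∧ ∑ i, s i ≤ 1}

def baryCoord {n : ℕ} (s : Fin n → ℝ) : Fin (n + 1) → ℝ := Fin.cons (1 - ∑ i, s i) s

-- `Fin.tail (Pi.single i 1)` is `0` for `i = 0` and the basis vector `e (i - 1)` otherwise: in
-- barycentric coordinates `mergeCoord i` adds up the weights of the vertices `i` and `i + 1`.
def mergeCoord {n : ℕ} (i : Fin (n + 1)) (s : Fin (n + 1) → ℝ) : Fin n → ℝ :=
  i.removeNth s + s i • Fin.tail (Pi.single i 1 : Fin (n + 1) → ℝ)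

variable {n : ℕ} {E : Type*} [NormedAddCommGroup E] [NormedSpace ℝ E]

theorem sum_baryCoord (s : Fin n → ℝ) : ∑ k, baryCoord s k = 1 := by
  simp [baryCoord, Fin.sum_cons]

theorem baryCoord_succ (s : Fin n → ℝ) (i : Fin n) : baryCoord s i.succ = s i := rfl

theorem mem_solidSimplex_iff {s : Fin n → ℝ} :
    s ∈ solidSimplex n ↔ ∀ k, 0 ≤ baryCoord s k := by
  simp [solidSimplex, baryCoord, Fin.forall_fin_succ, and_comm]

theorem isCompact_solidSimplex (n : ℕ) : IsCompact (solidSimplex n) := by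
  have hclosed : IsClosed (solidSimplex n) := by
    rw [solidSimplex, Set.ofPred_and, Set.ofPred_forall]
    exact (isClosed_iInter fun i => isClosed_le continuous_const (continuous_apply i)).inter
        (isClosed_le (continuous_finsetSum _ fun i _ => continuous_apply i) continuous_const)
  refine (isCompact_univ_pi fun _ => isCompact_Icc (a := (0 : ℝ)) (b := 1)).of_isClosed_subset
    hclosed ?_
  rintro s ⟨h0, h1⟩ i -
  exact ⟨h0 i, (Finset.single_le_sum (fun j _ => h0 j) (Finset.mem_univ i)).trans h1⟩

theorem continuous_baryCoord : Continuous (baryCoord : (Fin n → ℝ) → Fin (n + 1) → ℝ) := by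
  unfold baryCoord; fun_prop

theorem continuous_sum_baryCoord_mul (x : Fin (n + 1) → ℝ) :
    Continuous fun t : Fin n → ℝ => ∑ m, baryCoord t m * x m :=
  continuous_finsetSum _ fun m _ =>
    ((continuous_apply m).comp continuous_baryCoord).mul continuous_const

theorem divDiff_eq_setIntegral (f : ℝ → E) (x : Fin (n + 1) → ℝ) :
    divDiff f n x = ∫ s in solidSimplex n, iteratedDeriv n f (∑ k, baryCoord s k * x k) := by
  simp [divDiff, solidSimplex, baryCoord, Fin.sum_univ_succ]

theorem baryCoord_mergeCoord (i : Fin (n + 1)) (s : Fin (n + 1) → ℝ) :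
    baryCoord (mergeCoord i s) = i.succ.removeNth (baryCoord s) + s i • Pi.single i (1 : ℝ) := by
  have htail : ∑ m, Fin.tail (Pi.single i 1 : Fin (n + 1) → ℝ) m
      = 1 - (Pi.single i 1 : Fin (n + 1) → ℝ) 0 := by
    have := Fin.sum_univ_succ (Pi.single i 1 : Fin (n + 1) → ℝ)
    rw [Finset.sum_pi_single' i 1 Finset.univ, if_pos (Finset.mem_univ i)] at this
    simp only [Fin.tail]
    linarith
  have hsum : ∑ m, mergeCoord i s m =
      ∑ k, s k - s i + s i * (1 - (Pi.single i 1 : Fin (n + 1) → ℝ) 0) := by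
    simp only [mergeCoord, Pi.add_apply, Pi.smul_apply, smul_eq_mul, Finset.sum_add_distrib,
      ← Finset.mul_sum, htail, Fin.removeNth, Fin.sum_univ_succAbove s i]
    ring
  ext k
  refine Fin.cases ?_ (fun m => ?_) k
  · simp only [baryCoord, hsum, Fin.cons_zero, Pi.add_apply, Fin.removeNth,
      Fin.succAbove_ne_zero_zero (Fin.succ_ne_zero i), Pi.smul_apply, smul_eq_mul]
    ring
  · simp [baryCoord, mergeCoord, Fin.removeNth, Fin.tail]

theorem sum_baryCoord_mul_predAbove (i : Fin (n + 1)) (s : Fin (n + 1) → ℝ) (x : Fin (n + 1) → ℝ) :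
    ∑ k, baryCoord s k * x (i.predAbove k) = ∑ m, baryCoord (mergeCoord i s) m * x m := by
  rw [Fin.sum_univ_succAbove _ i.succ, baryCoord_mergeCoord]
  simp [add_mul, Finset.sum_add_distrib, Pi.single_apply, Fin.predAbove_succ_succAbove,
    Fin.removeNth, baryCoord_succ, add_comm]

theorem mem_solidSimplex_succ_iff (i : Fin (n + 1)) {s : Fin (n + 1) → ℝ} :
    s ∈ solidSimplex (n + 1) ↔
      mergeCoord i s ∈ solidSimplex n ∧ s i ∈ Set.Icc 0 (baryCoord (mergeCoord i s) i) := by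
  simp only [mem_solidSimplex_iff, baryCoord_mergeCoord, Fin.forall_iff_succAbove i.succ,
    baryCoord_succ, Pi.add_apply, Pi.smul_apply, smul_eq_mul, Fin.removeNth, Set.mem_Icc]
  constructor
  · rintro ⟨hi, h⟩
    have hsingle : (0 : Fin (n + 1) → ℝ) ≤ Pi.single i 1 := Pi.single_nonneg.2 zero_le_one
    exact ⟨fun m => add_nonneg (h m) (mul_nonneg hi (hsingle m)), hi, by simpa using h i⟩
  · rintro ⟨h, hi, hle⟩
    refine ⟨hi, fun m => ?_⟩
    by_cases hm : m = i
    · subst hm; simpa using hle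
    · simpa [hm] using h m

def mergeEquiv (i : Fin (n + 1)) : (Fin (n + 1) → ℝ) ≃ᵐ ℝ × (Fin n → ℝ) :=
  (MeasurableEquiv.piFinSuccAbove (fun _ => ℝ) i).trans
    (MeasurableEquiv.shear (Fin.tail (Pi.single i 1 : Fin (n + 1) → ℝ)))

theorem measurePreserving_mergeEquiv (i : Fin (n + 1)) :
    MeasurePreserving (mergeEquiv i) :=
  (MeasurableEquiv.measurePreserving_shear volume _).comp
    (volume_preserving_piFinSuccAbove (fun _ => ℝ) i)

theorem setIntegral_solidSimplex_mergeCoord (i : Fin (n + 1)) {G : (Fin n → ℝ) → E}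
    (hG : Continuous G) :
    ∫ s in solidSimplex (n + 1), G (mergeCoord i s) =
      ∫ t in solidSimplex n, baryCoord t i • G t := by
  have hpre : solidSimplex (n + 1) =
      mergeEquiv i ⁻¹' {p | p.2 ∈ solidSimplex n ∧ p.1 ∈ Set.Icc 0 (baryCoord p.2 i)} := by
    ext s; exact mem_solidSimplex_succ_iff i
  rw [hpre]
  refine ((measurePreserving_mergeEquiv i).setIntegral_preimage_emb
    (mergeEquiv i).measurableEmbedding (fun p => G p.2) _).trans ?_
  exact setIntegral_prod_Icc_snd volume (isCompact_solidSimplex n).measurableSet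
    ((continuous_apply i).comp continuous_baryCoord).measurable
    (fun t ht => mem_solidSimplex_iff.1 ht i) hG.stronglyMeasurable

theorem divDiff_comp_predAbove {f : ℝ → E} (hf : Continuous (iteratedDeriv (n + 1) f))
    (x : Fin (n + 1) → ℝ) (i : Fin (n + 1)) :
    divDiff f (n + 1) (x ∘ i.predAbove) =
      ∫ t in solidSimplex n,
        baryCoord t i • iteratedDeriv (n + 1) f (∑ m, baryCoord t m * x m) := by
  simp_rw [divDiff_eq_setIntegral, Function.comp_apply, sum_baryCoord_mul_predAbove]
  exact setIntegral_solidSimplex_mergeCoord i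
    (hf.comp (continuous_sum_baryCoord_mul x))

theorem sum_divDiff_comp_predAbove {f : ℝ → E} (hf : Continuous (iteratedDeriv (n + 1) f))
    (x : Fin (n + 1) → ℝ) :
    ∑ i : Fin (n + 1), divDiff f (n + 1) (x ∘ i.predAbove) = divDiff (deriv f) n x := by
  have hint : ∀ i : Fin (n + 1), IntegrableOn
      (fun t => baryCoord t i • iteratedDeriv (n + 1) f (∑ m, baryCoord t m * x m))
      (solidSimplex n) := fun i =>
    ContinuousOn.integrableOn_compact (isCompact_solidSimplex n)
      (((continuous_apply i).comp continuous_baryCoord).smul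
        (hf.comp (continuous_sum_baryCoord_mul x))).continuousOn
  simp_rw [divDiff_comp_predAbove hf, ← integral_finsetSum _ fun i _ => hint i, ← Finset.sum_smul,
    sum_baryCoord, one_smul, divDiff_eq_setIntegral, iteratedDeriv_succ']

end DividedDifference

/-- `∑_{i=0}^n f[x₀,…,xᵢ,xᵢ,…,xₙ] = f'[x₀,…,xₙ]`: summing the divided
differences of order `n+1` with the `i`-th point repeated gives the divided
difference of the derivative. -/
theorem sum_divDiff_repeated (n : ℕ) (f : ℝ → ℝ) (hf : ContDiff ℝ (n + 1) f)
    (x : Fin (n + 1) → ℝ) :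
    ∑ i : Fin (n + 1),
        divDiff f (n + 1) (fun j : Fin (n + 2) =>
          if h : (j : ℕ) ≤ (i : ℕ) then x ⟨j, by have := i.isLt; omega⟩
          else x ⟨(j : ℕ) - 1, by have := j.isLt; omega⟩) =
      divDiff (deriv f) n x := by
  have hnodes : ∀ i : Fin (n + 1), (fun j : Fin (n + 2) =>
      if h : (j : ℕ) ≤ (i : ℕ) then x ⟨j, by have := i.isLt; omega⟩
      else x ⟨(j : ℕ) - 1, by have := j.isLt; omega⟩) = x ∘ i.predAbove := by
    intro i; funext j
    split_ifs with h
    · rw [Function.comp_apply, Fin.predAbove_of_le_castSucc _ _ (Fin.le_def.2 h)]; rfl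
    · rw [Function.comp_apply, Fin.predAbove_of_castSucc_lt _ _ (Fin.lt_def.2 (not_le.1 h))]; rfl
  simp_rw [hnodes]
  exact DividedDifference.sum_divDiff_comp_predAbove (hf.continuous_iteratedDeriv _ le_rfl) x
end
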